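/- arXiv:1808.01674 — 3 statements merged into one kernel-verified Lean document; each statement's English description precedes it below -/
import Mathlib

section
/- Let λ ∈ (1/2,1) and C > 0, and suppose that for every n ≥ 1 and all distinct η, η' ∈ {−1,1}^n the sums satisfy |Σ_{k<n} η_k λ^k − Σ_{k<n} η'_k λ^k| ≥ C/2^n. Then there exists a constant C₆ > 0 such that β_n(x) ≤ C₆·(2λ)^n for every x ∈ ℝ and every n ≥ 1. -/
/-! The sums `Σ_{k<n} η_k λ^k` counted by `β_n(x)` lie in an interval of length `2λ^n/(1-λ)` around `x`
and are `C/2^n`-separated, so by pigeonholing them into cells of length `C/2^n` there are at most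
`2(2λ)^n/((1-λ)C) + 1` of them; since `2λ > 1`, the `+ 1` is absorbed into the constant. -/

open MeasureTheory Filter

noncomputable section

/-- The sign `±1` associated to a boolean digit. -/
def bsign (b : Bool) : ℝ := if b then 1 else -1

/-- The canonical coding map `π(ω) = Σ_{k≥0} ω_k λ^k` of the Bernoulli convolution system,
where the digits `ω_k ∈ {-1,1}` are encoded by booleans. -/
def bcPi (lam : ℝ) (ω : ℕ → Bool) : ℝ := ∑' k : ℕ, bsign (ω k) * lam ^ k

/-- The finite signed sum `Σ_{k<n} η_k λ^k`. -/
def bcSum (lam : ℝ) {n : ℕ} (η : Fin n → Bool) : ℝ := ∑ k : Fin n, bsign (η k) * lam ^ (k : ℕ)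

/-- `β_n(x)`: the number of `n`-tuples `η ∈ {-1,1}^n` with
`x ∈ φ_{η_0}∘…∘φ_{η_{n-1}}(I_λ)`, i.e. `|x − Σ_{k<n} η_k λ^k| ≤ λ^n/(1-λ)`. -/
def bcBeta (lam : ℝ) (n : ℕ) (x : ℝ) : ℕ :=
  Set.ncard {η : Fin n → Bool | |x - bcSum lam η| ≤ lam ^ n / (1 - lam)}

theorem Set.ncard_le_floor_of_separated {ι : Type*} {s : Set ι} {f : ι → ℝ} {a b δ : ℝ}
    (hδ : 0 < δ) (hf : ∀ i ∈ s, f i ∈ Set.Icc a b)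
    (hsep : ∀ i ∈ s, ∀ j ∈ s, i ≠ j → δ ≤ |f i - f j|) :
    s.ncard ≤ ⌊(b - a) / δ⌋₊ + 1 := by
  let cell : ι → ℕ := fun i => ⌊(f i - a) / δ⌋₊
  have hcell_nonneg : ∀ i ∈ s, 0 ≤ (f i - a) / δ := fun i hi =>
    div_nonneg (sub_nonneg.2 (hf i hi).1) hδ.le
  have hmaps : ∀ i ∈ s, cell i ∈ (Finset.range (⌊(b - a) / δ⌋₊ + 1) : Set ℕ) := by
    intro i hi
    rw [Finset.coe_range, Set.mem_Iio, Nat.lt_succ_iff]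
    exact Nat.floor_le_floor (div_le_div_of_nonneg_right (by linarith [(hf i hi).2]) hδ.le)
  have hinj : Set.InjOn cell s := by
    intro i hi j hj hij
    by_contra hne
    have hfloor : ⌊(f i - a) / δ⌋ = ⌊(f j - a) / δ⌋ := by
      rw [← Int.natCast_floor_eq_floor (hcell_nonneg i hi),
        ← Int.natCast_floor_eq_floor (hcell_nonneg j hj)]
      exact congrArg _ hij
    have hlt := Int.abs_sub_lt_one_of_floor_eq_floor hfloor
    rw [← sub_div, sub_sub_sub_cancel_right, abs_div, abs_of_pos hδ, div_lt_one hδ] at hlt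
    exact (hsep i hi j hj hne).not_gt hlt
  simpa using Set.ncard_le_ncard_of_injOn cell hmaps hinj

/-- If all distinct signed sums `Σ_{k<n} η_k λ^k` are at least `C/2^n` apart, then
`β_n(x) ≤ C₆ (2λ)^n` for all `x` and all `n ≥ 1`. -/
theorem beta_upper_of_separation (lam C : ℝ) (hlam₁ : 1 / 2 < lam) (hlam₂ : lam < 1)
    (hC : 0 < C)
    (hsep : ∀ n : ℕ, 1 ≤ n → ∀ η η' : Fin n → Bool, η ≠ η' →
      C / 2 ^ n ≤ |bcSum lam η - bcSum lam η'|) :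
    ∃ C₆ : ℝ, 0 < C₆ ∧ ∀ (x : ℝ) (n : ℕ), 1 ≤ n →
      (bcBeta lam n x : ℝ) ≤ C₆ * (2 * lam) ^ n := by
  have h1lam : 0 < 1 - lam := by linarith
  refine ⟨2 / ((1 - lam) * C) + 1, by positivity, fun x n hn => ?_⟩
  set r := lam ^ n / (1 - lam)
  have hcount : bcBeta lam n x ≤ ⌊((x + r) - (x - r)) / (C / 2 ^ n)⌋₊ + 1 :=
    Set.ncard_le_floor_of_separated (by positivity)
      (fun η (hη : |x - bcSum lam η| ≤ r) => by
        have := abs_sub_le_iff.1 hη; constructor <;> linarith)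
      (fun η _ η' _ hne => hsep n hn η η' hne)
  have hwidth : ((x + r) - (x - r)) / (C / 2 ^ n) = 2 / ((1 - lam) * C) * (2 * lam) ^ n := by
    simp only [r, mul_pow]
    field_simp
    ring
  have hgrowth : (1 : ℝ) ≤ (2 * lam) ^ n := one_le_pow₀ (by linarith)
  calc (bcBeta lam n x : ℝ)
      ≤ ⌊((x + r) - (x - r)) / (C / 2 ^ n)⌋₊ + 1 := by exact_mod_cast hcount
    _ ≤ 2 / ((1 - lam) * C) * (2 * lam) ^ n + 1 * (2 * lam) ^ n := by
      rw [hwidth, one_mul]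
      gcongr
      exact Nat.floor_le (by positivity)
    _ = (2 / ((1 - lam) * C) + 1) * (2 * lam) ^ n := by ring

end
end

section
/- For every λ ∈ (0,1) and every n ≥ 1, one has ∫_{Σ₂⁺} log β_n(π(ω)) dμ⁺(ω) ≥ n·log 2 − log q_n(λ), where q_n(λ) = card{Σ_{k<n} η_k λ^k : η ∈ {−1,1}^n} is the number of distinct values of the signed polynomial sums of length n. -/
open MeasureTheory Filter

noncomputable section

/-- `μ` is the fair-coin Bernoulli measure on `{-1,1}^ℕ`: every cylinder of length `n`
has measure `(1/2)^n`. -/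
def IsFairBernoulli (μ : Measure (ℕ → Bool)) : Prop :=
  ∀ (n : ℕ) (η : Fin n → Bool), μ {ω | ∀ k : Fin n, ω (k : ℕ) = η k} = (1 / 2 : ENNReal) ^ n


/-!
If `η` is the word of the first `n` digits of `ω`, then `π ω` lies in the cylinder image
`φ_η(I_λ)`, and this image only depends on the signed sum `Σ_{k<n} η_k λ^k`. Hence `β_n(π ω)` is
at least the size `m(η)` of the fibre of `η` under `η ↦ Σ_{k<n} η_k λ^k`. Since each cylinder has
mass `2⁻ⁿ`, `∫ log β_n ∘ π ≥ 2⁻ⁿ Σ_η log m(η) = 2⁻ⁿ Σ_v m_v log m_v`, where `v` runs over the `q_n`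
values of the signed sums, and Jensen's inequality for `t ↦ t log t` applied to the fibre sizes
`m_v`, which add up to `2ⁿ`, bounds this from below by `log (2ⁿ / q_n)`.
-/

open Finset

theorem card_mul_log_card_div_card_image_le_sum_log_card_fiber {α β : Type*} [Fintype α]
    [DecidableEq β] (f : α → β) :
    (Fintype.card α : ℝ) * Real.log (Fintype.card α / #(univ.image f)) ≤
      ∑ a, Real.log #{a' | f a' = f a} := by
  set t := univ.image f
  have hmaps : ∀ a ∈ (univ : Finset α), f a ∈ t := fun a _ => mem_image_of_mem f (mem_univ a)
  have hcard : ∑ b ∈ t, (#{a | f a = b} : ℝ) = Fintype.card α := by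
    exact_mod_cast (card_eq_sum_card_fiberwise hmaps).symm
  have hfiber : ∑ a, Real.log #{a' | f a' = f a} =
      ∑ b ∈ t, (#{a | f a = b} : ℝ) * Real.log #{a | f a = b} := by
    rw [← sum_fiberwise_of_maps_to hmaps]
    refine sum_congr rfl fun b _ => ?_
    rw [← nsmul_eq_mul, ← sum_const]
    exact sum_congr rfl fun a ha => by rw [(mem_filter.1 ha).2]
  rcases t.eq_empty_or_nonempty with ht | ht
  · simp [hfiber, ht]
  have hq : (0 : ℝ) < #t := by exact_mod_cast ht.card_pos
  have hjensen := Real.convexOn_mul_log.map_sum_le (t := t) (w := fun _ => (#t : ℝ)⁻¹)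
    (p := fun b => (#{a | f a = b} : ℝ)) (fun _ _ => by positivity)
    (by simp [hq.ne']) (fun _ _ => Set.mem_Ici.2 (by positivity))
  simp only [smul_eq_mul, ← mul_sum, hcard, ← hfiber] at hjensen
  rw [inv_mul_eq_div] at hjensen
  calc (Fintype.card α : ℝ) * Real.log (Fintype.card α / #t)
      = #t * (Fintype.card α / #t * Real.log (Fintype.card α / #t)) := by
        field_simp
    _ ≤ #t * ((#t : ℝ)⁻¹ * ∑ a, Real.log #{a' | f a' = f a}) := by gcongr
    _ = ∑ a, Real.log #{a' | f a' = f a} := by field_simp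

theorem ncard_range_eq_card_image {α β : Type*} [Fintype α] [DecidableEq β] (f : α → β) :
    (Set.range f).ncard = #(univ.image f) := by
  rw [← Set.ncard_coe_finset, coe_image, coe_univ, Set.image_univ]

theorem abs_bsign (b : Bool) : |bsign b| = 1 := by cases b <;> simp [bsign]

theorem norm_bsign_mul_pow_le {lam : ℝ} (h₀ : 0 ≤ lam) (b : Bool) (k : ℕ) :
    ‖bsign b * lam ^ k‖ ≤ lam ^ k := by
  rw [Real.norm_eq_abs, abs_mul, abs_bsign, one_mul, abs_of_nonneg (pow_nonneg h₀ k)]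

theorem continuous_bcPi {lam : ℝ} (h₀ : 0 ≤ lam) (h₁ : lam < 1) : Continuous (bcPi lam) :=
  continuous_tsum (fun k => ((continuous_of_discreteTopology (f := bsign)).comp
    (continuous_apply k)).mul continuous_const) (summable_geometric_of_lt_one h₀ h₁)
    fun k ω => norm_bsign_mul_pow_le h₀ (ω k) k

theorem abs_bcPi_sub_bcSum_le {lam : ℝ} (h₀ : 0 ≤ lam) (h₁ : lam < 1) (n : ℕ) (ω : ℕ → Bool) :
    |bcPi lam ω - bcSum lam (fun k : Fin n => ω k)| ≤ lam ^ n / (1 - lam) := by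
  have hsum : Summable fun k => bsign (ω k) * lam ^ k :=
    .of_norm_bounded (summable_geometric_of_lt_one h₀ h₁) fun k => norm_bsign_mul_pow_le h₀ _ k
  have htail := (hasSum_nat_add_iff' n).2 hsum.hasSum
  rw [← Fin.sum_univ_eq_sum_range (fun k => bsign (ω k) * lam ^ k)] at htail
  have hgeom := (hasSum_geometric_of_lt_one h₀ h₁).mul_left (lam ^ n)
  simpa [bcPi, bcSum, div_eq_mul_inv] using htail.norm_le_of_bounded hgeom
    fun k => (norm_bsign_mul_pow_le h₀ _ (k + n)).trans_eq (by ring)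

theorem bcBeta_le_two_pow (lam : ℝ) (n : ℕ) (x : ℝ) : bcBeta lam n x ≤ 2 ^ n :=
  (Set.ncard_le_card _).trans_eq (by simp)

theorem card_fiber_le_bcBeta {lam x : ℝ} {n : ℕ} {η : Fin n → Bool}
    (h : |x - bcSum lam η| ≤ lam ^ n / (1 - lam)) :
    #{η' : Fin n → Bool | bcSum lam η' = bcSum lam η} ≤ bcBeta lam n x := by
  rw [bcBeta, ← Set.ncard_coe_finset]
  exact Set.ncard_le_ncard fun η' hη' => by simp_all

theorem integrable_log_natCast_of_le {α : Type*} [MeasurableSpace α] {μ : Measure α}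
    [IsFiniteMeasure μ] {f : α → ℕ} (hf : Measurable f) {N : ℕ} (hN : ∀ a, f a ≤ N) :
    Integrable (fun a => Real.log (f a)) μ := by
  refine .of_bound (measurable_from_nat.comp hf).log.aestronglyMeasurable (Real.log N)
    (.of_forall fun a => ?_)
  rw [Real.norm_eq_abs, abs_of_nonneg (Real.log_natCast_nonneg _)]
  rcases (f a).eq_zero_or_pos with h | h
  · simpa [h] using Real.log_natCast_nonneg N
  · exact Real.log_le_log (by exact_mod_cast h) (by exact_mod_cast hN a)

theorem measurable_bcBeta (lam : ℝ) (n : ℕ) : Measurable (bcBeta lam n) := by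
  have hdigits : Measurable fun x (η : Fin n → Bool) =>
      decide (|x - bcSum lam η| ≤ lam ^ n / (1 - lam)) :=
    measurable_pi_lambda _ fun η => measurable_to_bool <| by
      simpa [Set.preimage] using measurableSet_le (f := fun x => |x - bcSum lam η|) (by fun_prop)
        measurable_const
  have : bcBeta lam n = (fun b : (Fin n → Bool) → Bool => {η | b η}.ncard) ∘
      fun x (η : Fin n → Bool) => decide (|x - bcSum lam η| ≤ lam ^ n / (1 - lam)) := by
    ext x; simp [bcBeta]
  exact this ▸ (measurable_of_countable _).comp hdigits

theorem IsFairBernoulli.isProbabilityMeasure {μ : Measure (ℕ → Bool)} (hμ : IsFairBernoulli μ) :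
    IsProbabilityMeasure μ :=
  ⟨by simpa using hμ 0 Fin.elim0⟩

theorem IsFairBernoulli.integral_comp_restrict {E : Type*} [NormedAddCommGroup E]
    [NormedSpace ℝ E] [CompleteSpace E] {μ : Measure (ℕ → Bool)} (hμ : IsFairBernoulli μ)
    (n : ℕ) (g : (Fin n → Bool) → E) :
    ∫ ω, g (fun k => ω k) ∂μ = (2 ^ n : ℝ)⁻¹ • ∑ η, g η := by
  have := hμ.isProbabilityMeasure
  have hp : Measurable fun (ω : ℕ → Bool) (k : Fin n) => ω k :=
    measurable_pi_lambda _ fun k => measurable_pi_apply _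
  have hcyl (η : Fin n → Bool) : (μ.map fun ω (k : Fin n) => ω k).real {η} = (2 ^ n : ℝ)⁻¹ := by
    rw [measureReal_def, Measure.map_apply hp (measurableSet_singleton η)]
    simp [Set.preimage, funext_iff, hμ n η]
  rw [← integral_map hp.aemeasurable .of_discrete, integral_fintype .of_finite]
  simp [hcyl, smul_sum]

theorem integral_log_beta_ge_general (lam : ℝ) (hlam₁ : 0 < lam) (hlam₂ : lam < 1)
    (μ : Measure (ℕ → Bool)) (hμ : IsFairBernoulli μ) (n : ℕ) :
    (n : ℝ) * Real.log 2 -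
        Real.log (Set.ncard {y : ℝ | ∃ η : Fin n → Bool, bcSum lam η = y}) ≤
      ∫ ω, Real.log (bcBeta lam n (bcPi lam ω)) ∂μ := by
  have := hμ.isProbabilityMeasure
  set q := #((univ : Finset (Fin n → Bool)).image (bcSum lam))
  have hq : Set.ncard {y : ℝ | ∃ η : Fin n → Bool, bcSum lam η = y} = q :=
    ncard_range_eq_card_image _
  set m : (Fin n → Bool) → ℕ := fun η => #{η' | bcSum lam η' = bcSum lam η}
  have hq_pos : (0 : ℝ) < q := by exact_mod_cast (univ_nonempty.image _).card_pos
  have hm_pos (η : Fin n → Bool) : (0 : ℝ) < m η := by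
    exact_mod_cast card_pos.2 ⟨η, by simp⟩
  have hm_le_beta (ω : ℕ → Bool) : m (fun k => ω k) ≤ bcBeta lam n (bcPi lam ω) :=
    card_fiber_le_bcBeta (abs_bcPi_sub_bcSum_le hlam₁.le hlam₂ n ω)
  have hm_int : Integrable (fun ω : ℕ → Bool => Real.log (m fun k => ω k)) μ :=
    integrable_log_natCast_of_le (by fun_prop) fun _ => card_le_univ _
  have hbeta_int : Integrable (fun ω => Real.log (bcBeta lam n (bcPi lam ω))) μ :=
    integrable_log_natCast_of_le ((measurable_bcBeta lam n).comp
      (continuous_bcPi hlam₁.le hlam₂).measurable) fun _ => bcBeta_le_two_pow lam n _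
  rw [hq]
  calc (n : ℝ) * Real.log 2 - Real.log q
      = (2 ^ n : ℝ)⁻¹ * ((2 ^ n : ℝ) * Real.log (2 ^ n / q)) := by
        rw [Real.log_div (by positivity) hq_pos.ne', Real.log_pow]; field_simp
    _ ≤ (2 ^ n : ℝ)⁻¹ * ∑ η, Real.log (m η) := by
        gcongr
        simpa using card_mul_log_card_div_card_image_le_sum_log_card_fiber (bcSum lam (n := n))
    _ = ∫ ω, Real.log (m fun k => ω k) ∂μ :=
        (hμ.integral_comp_restrict n fun η => Real.log (m η)).symm
    _ ≤ ∫ ω, Real.log (bcBeta lam n (bcPi lam ω)) ∂μ :=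
        integral_mono hm_int hbeta_int fun ω =>
          Real.log_le_log (hm_pos _) (by exact_mod_cast hm_le_beta ω)

/-- For every `λ ∈ (0,1)` and `n ≥ 1`,
`∫ log β_n(π ω) dμ⁺(ω) ≥ n log 2 − log q_n(λ)`, where `q_n(λ)` is the number of distinct
values of the signed sums `Σ_{k<n} η_k λ^k`, `η ∈ {-1,1}^n`. -/
theorem integral_log_beta_ge (lam : ℝ) (hlam₁ : 0 < lam) (hlam₂ : lam < 1)
    (μ : Measure (ℕ → Bool)) [IsProbabilityMeasure μ] (hμ : IsFairBernoulli μ)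
    (n : ℕ) (hn : 1 ≤ n) :
    (n : ℝ) * Real.log 2 -
        Real.log (Set.ncard {y : ℝ | ∃ η : Fin n → Bool, bcSum lam η = y}) ≤
      ∫ ω, Real.log (bcBeta lam n (bcPi lam ω)) ∂μ :=
  integral_log_beta_ge_general lam hlam₁ hlam₂ μ hμ n
end
end

section
/- Let I = {1,…,m}, let 0 = k₀ < k₁ < … < k_p = m, and let S = {φ_1,…,φ_m} be injective contractions of ℝ^d such that φ_j = φ_{k_i} whenever k_{i−1} < j ≤ k_i (for 1 ≤ i ≤ p), and such that the images φ_{k_1}(Λ), …, φ_{k_p}(Λ) of the limit set Λ are pairwise disjoint. Then the limit lim_{n→∞} (1/n) ∫_{Σ_I⁺} log β_n(π(ω)) dμ⁺_max(ω) exists and equals (1/m)·[k₁ log k₁ + (k₂−k₁) log(k₂−k₁) + … + (k_p−k_{p−1}) log(k_p−k_{p−1})]; that is, the topological overlap number of S is o(S) = exp of this quantity. -/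
/-!
Since maps in one block coincide and distinct blocks have disjoint images, the injectivity of
the maps shows that `π ω ∈ φ_η(Λ)` for a word `η` of length `n` exactly when every `η_t` lies
in the block of `ω_t`; hence `β_n(π ω) = ∏_{t<n} c(ω_t)`, where `c(a)` is the length of the
block of `a`. Thus `log β_n(π ω)` is a Birkhoff sum along `ω`, each coordinate of which is
uniformly distributed under the Bernoulli measure, so `(1/n) ∫ log β_n = (1/m) Σ_a log c(a)`
for every `n ≥ 1`, and grouping the `a` by blocks gives `(1/m) Σ_i c_i log c_i`.
-/

open MeasureTheory Filter

noncomputable section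

/-- Composition `φ_{η 0} ∘ φ_{η 1} ∘ … ∘ φ_{η (n-1)}` of the maps of an iterated function
system along a finite word `η`. -/
def comps {α E : Type*} (φ : α → E → E) {n : ℕ} (η : Fin n → α) : E → E :=
  (List.ofFn fun k => φ (η k)).foldr (· ∘ ·) id

/-- `β_n(x)`: the number of words `(η_1,…,η_n) ∈ I^n` with
`x ∈ φ_{η_1}∘…∘φ_{η_n}(Λ)`. -/
def ifsBeta {m : ℕ} {E : Type*} (φ : Fin m → E → E) (Λ : Set E) (n : ℕ) (x : E) : ℕ :=
  Set.ncard {η : Fin n → Fin m | x ∈ comps φ η '' Λ}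

/-- `μ` is the uniform Bernoulli measure on `I^ℕ` (`|I| = m`): every cylinder of
length `n` has measure `(1/m)^n`. This is the measure of maximal entropy for the shift. -/
def IsUniformBernoulli (m : ℕ) (μ : Measure (ℕ → Fin m)) : Prop :=
  ∀ (n : ℕ) (η : Fin n → Fin m),
    μ {ω | ∀ k : Fin n, ω (k : ℕ) = η k} = (1 / (m : ENNReal)) ^ n

/-- The system `{φ_i, i ∈ I}` consists of injective contractions, with nonempty compact
limit set `Λ = ⋃_i φ_i(Λ)`, and `π` is the canonical (continuous) coding map onto `Λ`. -/
structure IsIFSSetup {m d : ℕ} (φ : Fin m → EuclideanSpace ℝ (Fin d) → EuclideanSpace ℝ (Fin d))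
    (Λ : Set (EuclideanSpace ℝ (Fin d))) (π : (ℕ → Fin m) → EuclideanSpace ℝ (Fin d)) : Prop where
  inj : ∀ i, Function.Injective (φ i)
  contr : ∀ i, ∃ r : NNReal, r < 1 ∧ LipschitzWith r (φ i)
  compact : IsCompact Λ
  nonempty : Λ.Nonempty
  selfSimilar : Λ = ⋃ i, φ i '' Λ
  pi_continuous : Continuous π
  pi_mem : ∀ ω, π ω ∈ Λ
  pi_eq : ∀ ω, π ω = φ (ω 0) (π fun k => ω (k + 1))

open Set Function

section Coding

variable {m : ℕ} {E : Type*} {φ : Fin m → E → E} {Λ : Set E}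

variable (φ Λ) in
def HasExactOverlaps : Prop :=
  ∀ a b, φ a ≠ φ b → Disjoint (φ a '' Λ) (φ b '' Λ)

variable (φ) in
def overlapMultiplicity (a : Fin m) : ℕ :=
  {b | φ b = φ a}.ncard

lemma overlapMultiplicity_pos (a : Fin m) : 0 < overlapMultiplicity φ a :=
  (Set.ncard_pos (toFinite _)).2 ⟨a, rfl⟩

@[simp]
lemma comps_zero {α : Type*} (ψ : α → E → E) (η : Fin 0 → α) : comps ψ η = id := by
  simp [comps]

lemma comps_cons {α : Type*} (ψ : α → E → E) {n : ℕ} (a : α) (η : Fin n → α) :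
    comps ψ (Fin.cons a η) = ψ a ∘ comps ψ η := by
  simp [comps, List.ofFn_succ]

lemma mapsTo_comps {α : Type*} {ψ : α → E → E} (h : ∀ a, MapsTo (ψ a) Λ Λ) :
    ∀ {n : ℕ} (η : Fin n → α), MapsTo (comps ψ η) Λ Λ
  | 0, η => by simpa using mapsTo_id Λ
  | n + 1, η => by
    rw [← Fin.cons_self_tail η, comps_cons]
    exact (h _).comp (mapsTo_comps h _)

lemma ifsBeta_zero {x : E} (hx : x ∈ Λ) : ifsBeta φ Λ 0 x = 1 := by
  simp [ifsBeta, hx]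

section

variable (hmaps : ∀ a, MapsTo (φ a) Λ Λ) (hinj : ∀ a, Injective (φ a))
  (hexact : HasExactOverlaps φ Λ)
include hmaps hinj hexact

lemma mem_image_comps_cons_iff {x : E} (hx : x ∈ Λ) (a b : Fin m) {n : ℕ}
    (η : Fin n → Fin m) :
    φ a x ∈ comps φ (Fin.cons b η) '' Λ ↔ φ b = φ a ∧ x ∈ comps φ η '' Λ := by
  rw [comps_cons, image_comp]
  constructor
  · rintro ⟨y, hy, hyx⟩
    by_cases hba : φ b = φ a
    · rw [hba] at hyx
      exact ⟨hba, hinj a hyx ▸ hy⟩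
    · exact (disjoint_left.1 (hexact b a hba)
        (mem_image_of_mem _ ((mapsTo_comps hmaps η).image_subset hy))
        (hyx ▸ mem_image_of_mem _ hx)).elim
  · rintro ⟨hba, hx⟩
    exact hba ▸ mem_image_of_mem _ hx

lemma ifsBeta_succ_apply {x : E} (hx : x ∈ Λ) (a : Fin m) (n : ℕ) :
    ifsBeta φ Λ (n + 1) (φ a x) = overlapMultiplicity φ a * ifsBeta φ Λ n x := by
  have hset : {η : Fin (n + 1) → Fin m | φ a x ∈ comps φ η '' Λ} =
      uncurry Fin.cons '' ({b | φ b = φ a} ×ˢ {η | x ∈ comps φ η '' Λ}) := by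
    ext η
    induction η using Fin.consCases with
    | _ b η =>
      rw [mem_ofPred_eq, mem_image_comps_cons_iff hmaps hinj hexact hx]
      simp [Fin.cons_injective2.eq_iff]
  rw [ifsBeta, hset, ncard_image_of_injective _ Fin.cons_injective2.uncurry, ncard_prod,
    overlapMultiplicity, ifsBeta]

lemma ifsBeta_coding_eq_prod {π : (ℕ → Fin m) → E} (hπΛ : ∀ ω, π ω ∈ Λ)
    (hπ : ∀ ω, π ω = φ (ω 0) (π fun t => ω (t + 1))) :
    ∀ (n : ℕ) (ω : ℕ → Fin m),
      ifsBeta φ Λ n (π ω) = ∏ t : Fin n, overlapMultiplicity φ (ω t)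
  | 0, ω => by simp [ifsBeta_zero (hπΛ ω)]
  | n + 1, ω => by
    rw [hπ ω, ifsBeta_succ_apply hmaps hinj hexact (hπΛ _),
      ifsBeta_coding_eq_prod hπΛ hπ n, Fin.prod_univ_succ]
    simp

lemma log_ifsBeta_coding_eq_sum {π : (ℕ → Fin m) → E} (hπΛ : ∀ ω, π ω ∈ Λ)
    (hπ : ∀ ω, π ω = φ (ω 0) (π fun t => ω (t + 1))) (n : ℕ) (ω : ℕ → Fin m) :
    Real.log (ifsBeta φ Λ n (π ω)) =
      ∑ t : Fin n, Real.log (overlapMultiplicity φ (ω t)) := by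
  rw [ifsBeta_coding_eq_prod hmaps hinj hexact hπΛ hπ, Nat.cast_prod,
    Real.log_prod fun t _ => Nat.cast_ne_zero.2 (overlapMultiplicity_pos _).ne']

end

end Coding

section UniformBernoulli

variable {m : ℕ} {μ : Measure (ℕ → Fin m)}

def prefixCylinder {n : ℕ} (η : Fin n → Fin m) : Set (ℕ → Fin m) :=
  {ω | ∀ k : Fin n, ω k = η k}

lemma measurableSet_prefixCylinder {n : ℕ} (η : Fin n → Fin m) :
    MeasurableSet (prefixCylinder η) := by
  simp only [prefixCylinder, ofPred_forall]
  exact MeasurableSet.iInter fun k => measurable_pi_apply _ (measurableSet_singleton _)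

lemma IsUniformBernoulli.measure_eval_eq (hμ : IsUniformBernoulli m μ) (t : ℕ) (a : Fin m) :
    μ {ω | ω t = a} = (m : ENNReal)⁻¹ := by
  have hcover : {ω : ℕ → Fin m | ω t = a} =
      ⋃ η : Fin t → Fin m, prefixCylinder (Fin.snoc η a : Fin (t + 1) → Fin m) := by
    ext ω
    simp only [prefixCylinder, mem_ofPred_eq, mem_iUnion, Fin.forall_fin_succ',
      Fin.snoc_castSucc, Fin.snoc_last, Fin.val_castSucc, Fin.val_last]
    exact ⟨fun h => ⟨fun k => ω k, fun _ => rfl, h⟩, fun ⟨_, _, h⟩ => h⟩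
  have hdisj : Pairwise (Disjoint on fun η : Fin t → Fin m =>
      prefixCylinder (Fin.snoc η a : Fin (t + 1) → Fin m)) := by
    refine fun η η' hne => disjoint_left.2 fun ω h h' => hne (funext fun k => ?_)
    simpa using (h k.castSucc).symm.trans (h' k.castSucc)
  have hm : (m : ENNReal) ≠ 0 := Nat.cast_ne_zero.2 a.pos.ne'
  rw [hcover, measure_iUnion hdisj fun _ => measurableSet_prefixCylinder _, tsum_fintype]
  have hcylinder : ∀ η : Fin (t + 1) → Fin m,
      μ (prefixCylinder η) = (1 / (m : ENNReal)) ^ (t + 1) := hμ (t + 1)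
  simp only [hcylinder, Finset.sum_const, Finset.card_univ, Fintype.card_fun, Fintype.card_fin,
    nsmul_eq_mul, Nat.cast_pow, one_div, pow_succ, ← mul_assoc, ← mul_pow,
    ENNReal.mul_inv_cancel hm (ENNReal.natCast_ne_top m), one_pow, one_mul]

lemma IsUniformBernoulli.integral_comp_eval [IsFiniteMeasure μ] (hμ : IsUniformBernoulli m μ)
    (g : Fin m → ℝ) (t : ℕ) : ∫ ω, g (ω t) ∂μ = (∑ a, g a) / m := by
  have heval : Measurable fun ω : ℕ → Fin m => ω t := measurable_pi_apply t
  rw [← integral_map heval.aemeasurable (.of_discrete), integral_fintype .of_finite,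
    Finset.sum_div]
  refine Finset.sum_congr rfl fun a _ => ?_
  rw [measureReal_def, Measure.map_apply heval (measurableSet_singleton a)]
  simp only [preimage, mem_singleton_iff]
  rw [hμ.measure_eval_eq, ENNReal.toReal_inv, ENNReal.toReal_natCast, smul_eq_mul, inv_mul_eq_div]

lemma IsUniformBernoulli.integral_sum_comp_eval [IsFiniteMeasure μ]
    (hμ : IsUniformBernoulli m μ) (g : Fin m → ℝ) (n : ℕ) :
    ∫ ω, ∑ t : Fin n, g (ω t) ∂μ = n * ((∑ a, g a) / m) := by
  have hint (t : ℕ) : Integrable (fun ω : ℕ → Fin m => g (ω t)) μ :=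
    Integrable.comp_measurable .of_finite (measurable_pi_apply t)
  rw [integral_finsetSum _ fun (t : Fin n) _ => hint t]
  simp [hμ.integral_comp_eval]

end UniformBernoulli

section Blocks

variable {p m : ℕ} {k : Fin (p + 1) → ℕ}

variable (k) in
def block (i : Fin p) : Finset (Fin m) :=
  {j | k i.castSucc ≤ j ∧ (j : ℕ) < k i.succ}

@[simp]
lemma mem_block {i : Fin p} {j : Fin m} :
    j ∈ block k i ↔ k i.castSucc ≤ j ∧ (j : ℕ) < k i.succ := by
  simp [block]

lemma card_block {i : Fin p} (hi : k i.succ ≤ m) :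
    (block k i : Finset (Fin m)).card = k i.succ - k i.castSucc := by
  have hlt : ∀ j ∈ Finset.Ico (k i.castSucc) (k i.succ), j < m :=
    fun j hj => (Finset.mem_Ico.1 hj).2.trans_le hi
  rw [← Nat.card_Ico, ← Finset.card_attachFin _ hlt]
  congr 1
  ext j
  simp

lemma exists_mem_block (hk0 : k 0 = 0) (hkm : k (Fin.last p) = m) (j : Fin m) :
    ∃ i, j ∈ block k i := by
  by_contra! h
  have hle (t : Fin (p + 1)) : k t ≤ j := by
    induction t using Fin.induction with
    | zero => omega
    | succ i ih => simpa [ih] using h i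
  have := hle (Fin.last p)
  omega

lemma eq_of_mem_block (hk : Monotone k) {i i' : Fin p} {j : Fin m} (hi : j ∈ block k i)
    (hi' : j ∈ block k i') : i = i' := by
  rw [mem_block] at hi hi'
  by_contra hne
  rcases lt_or_gt_of_ne hne with h | h
  · have := hk (Fin.succ_le_castSucc_iff.2 h)
    omega
  · have := hk (Fin.succ_le_castSucc_iff.2 h)
    omega

lemma sum_eq_sum_sum_block {M : Type*} [AddCommMonoid M] (hk0 : k 0 = 0)
    (hkm : k (Fin.last p) = m) (hk : Monotone k) (f : Fin m → M) :
    ∑ j, f j = ∑ i, ∑ j ∈ block k i, f j := by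
  classical
  rw [← Finset.sum_biUnion fun i _ i' _ hne =>
    Finset.disjoint_left.2 fun j h h' => hne (eq_of_mem_block hk h h')]
  congr 1
  ext j
  simpa using exists_mem_block hk0 hkm j

variable {E : Type*} {φ : Fin m → E → E} {Λ : Set E}
  (hk0 : k 0 = 0) (hkm : k (Fin.last p) = m)
  (hblock : ∀ i, ∀ a ∈ block k i, ∀ b ∈ block k i, φ a = φ b)
  (hdisj : ∀ i i', i ≠ i' → ∀ a ∈ block k i, ∀ b ∈ block k i',
    Disjoint (φ a '' Λ) (φ b '' Λ))
include hk0 hkm hblock hdisj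

lemma hasExactOverlaps_of_blocks : HasExactOverlaps φ Λ := by
  intro a b hab
  obtain ⟨i, ha⟩ := exists_mem_block hk0 hkm a
  obtain ⟨i', hb⟩ := exists_mem_block hk0 hkm b
  by_cases hii' : i = i'
  · subst hii'
    exact absurd (hblock i a ha b hb) hab
  · exact hdisj i i' hii' a ha b hb

lemma overlapMultiplicity_eq_card_block (hΛ : Λ.Nonempty) {i : Fin p} {a : Fin m}
    (ha : a ∈ block k i) : overlapMultiplicity φ a = (block k i : Finset (Fin m)).card := by
  rw [overlapMultiplicity, ← ncard_coe_finset]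
  congr 1
  ext b
  refine ⟨fun hb => ?_, fun hb => hblock i b hb a ha⟩
  obtain ⟨i', hb'⟩ := exists_mem_block hk0 hkm b
  by_contra hbi
  have hii' : i' ≠ i := fun h => hbi (h ▸ hb')
  have := hdisj i' i hii' b hb' a ha
  rw [show φ b = φ a from hb, disjoint_self, bot_eq_empty, image_eq_empty] at this
  exact hΛ.ne_empty this

lemma sum_log_overlapMultiplicity (hk : Monotone k) (hΛ : Λ.Nonempty) :
    ∑ a, Real.log (overlapMultiplicity φ a) =
      ∑ i : Fin p, ((k i.succ - k i.castSucc : ℕ) : ℝ) *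
        Real.log ((k i.succ - k i.castSucc : ℕ) : ℝ) := by
  rw [sum_eq_sum_sum_block hk0 hkm hk]
  refine Finset.sum_congr rfl fun i _ => ?_
  rw [Finset.sum_congr rfl fun a ha => by
      rw [overlapMultiplicity_eq_card_block hk0 hkm hblock hdisj hΛ ha],
    Finset.sum_const, nsmul_eq_mul, card_block (hkm ▸ hk (Fin.le_last _))]

end Blocks

lemma IsIFSSetup.mapsTo {m d : ℕ}
    {φ : Fin m → EuclideanSpace ℝ (Fin d) → EuclideanSpace ℝ (Fin d)}
    {Λ : Set (EuclideanSpace ℝ (Fin d))} {π : (ℕ → Fin m) → EuclideanSpace ℝ (Fin d)}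
    (hS : IsIFSSetup φ Λ π) (a : Fin m) : MapsTo (φ a) Λ Λ := fun x hx => by
  rw [hS.selfSimilar]
  exact mem_iUnion.2 ⟨a, mem_image_of_mem _ hx⟩

/-- Exact overlaps in blocks: if `0 = k₀ < k₁ < … < k_p = m`, the maps `φ_j` coincide within
each block `k_{i-1} < j ≤ k_i` (here `0`-indexed: `k_{i-1} ≤ j < k_i`), and images of the
distinct blocks are pairwise disjoint, then the topological overlap number of `S` is
`o(S) = exp((1/m) Σ_i (k_i − k_{i-1}) log(k_i − k_{i-1}))`. -/
theorem overlap_number_exact_blocks {m d p : ℕ}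
    (φ : Fin m → EuclideanSpace ℝ (Fin d) → EuclideanSpace ℝ (Fin d))
    (Λ : Set (EuclideanSpace ℝ (Fin d))) (π : (ℕ → Fin m) → EuclideanSpace ℝ (Fin d))
    (hS : IsIFSSetup φ Λ π)
    (k : Fin (p + 1) → ℕ) (hk0 : k 0 = 0) (hkm : k (Fin.last p) = m) (hkmono : StrictMono k)
    (hblock : ∀ i : Fin p, ∀ j j' : Fin m,
      k i.castSucc ≤ (j : ℕ) → (j : ℕ) < k i.succ →
      k i.castSucc ≤ (j' : ℕ) → (j' : ℕ) < k i.succ → φ j = φ j')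
    (hdisj : ∀ i i' : Fin p, i ≠ i' → ∀ j j' : Fin m,
      k i.castSucc ≤ (j : ℕ) → (j : ℕ) < k i.succ →
      k i'.castSucc ≤ (j' : ℕ) → (j' : ℕ) < k i'.succ →
      Disjoint (φ j '' Λ) (φ j' '' Λ))
    (μ : Measure (ℕ → Fin m)) [IsProbabilityMeasure μ] (hμ : IsUniformBernoulli m μ) :
    Tendsto (fun n : ℕ => (1 / (n : ℝ)) * ∫ ω, Real.log (ifsBeta φ Λ n (π ω)) ∂μ) atTop
      (nhds ((1 / (m : ℝ)) *
        ∑ i : Fin p, ((k i.succ - k i.castSucc : ℕ) : ℝ) *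
          Real.log ((k i.succ - k i.castSucc : ℕ) : ℝ))) := by
  have hblock' : ∀ i, ∀ a ∈ block k i, ∀ b ∈ block k i, φ a = φ b := by
    simp only [mem_block]
    exact fun i a ha b hb => hblock i a b ha.1 ha.2 hb.1 hb.2
  have hdisj' : ∀ i i', i ≠ i' → ∀ a ∈ block k i, ∀ b ∈ block k i',
      Disjoint (φ a '' Λ) (φ b '' Λ) := by
    simp only [mem_block]
    exact fun i i' hii' a ha b hb => hdisj i i' hii' a b ha.1 ha.2 hb.1 hb.2
  have hexact := hasExactOverlaps_of_blocks hk0 hkm hblock' hdisj'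
  have hintegral (n : ℕ) : ∫ ω, Real.log (ifsBeta φ Λ n (π ω)) ∂μ =
      n * ((∑ a, Real.log (overlapMultiplicity φ a)) / m) := by
    simp_rw [log_ifsBeta_coding_eq_sum hS.mapsTo hS.inj hexact hS.pi_mem hS.pi_eq]
    exact hμ.integral_sum_comp_eval (fun a => Real.log (overlapMultiplicity φ a)) n
  rw [sum_log_overlapMultiplicity hk0 hkm hblock' hdisj' hkmono.monotone hS.nonempty] at hintegral
  refine tendsto_const_nhds.congr' ?_
  filter_upwards [eventually_ne_atTop 0] with n hn
  rw [hintegral]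
  field_simp

end
end
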